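/- For each upward closed subset U of the n-universal model T(n) there is a NNIL-formula β⁺(U) in the variables p_1,…,p_n such that for every node T_u of T(n): T(n), T_u ⊨ β⁺(U) if and only if T_u ∈ U. (Hence T(n) is an exact model: every upset of T(n) is definable by a NNIL-formula.) -/

import Mathlib

/-! ## Formulas of intuitionistic propositional logic -/

inductive Formula : Type
  | bot : Formula
  | var : ℕ → Formula
  | and : Formula → Formula → Formula
  | or  : Formula → Formula → Formula
  | imp : Formula → Formula → Formula
  deriving DecidableEq

namespace Formula

def top : Formula := imp bot bot

def iff_ (φ ψ : Formula) : Formula := and (imp φ ψ) (imp ψ φ)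

/-- `φ` contains no implication at all. -/
def noImp : Formula → Prop
  | bot => True
  | var _ => True
  | and φ ψ => noImp φ ∧ noImp ψ
  | or φ ψ => noImp φ ∧ noImp ψ
  | imp _ _ => False

/-- NNIL-formulas: no nesting of implications to the left. -/
def IsNNIL : Formula → Prop
  | bot => True
  | var _ => True
  | and φ ψ => IsNNIL φ ∧ IsNNIL ψ
  | or φ ψ => IsNNIL φ ∧ IsNNIL ψ
  | imp φ ψ => noImp φ ∧ IsNNIL ψ

/-- `φ` is an `n`-formula: all its propositional variables are among `p_0, …, p_{n-1}`. -/
def varsBelow (n : ℕ) : Formula → Prop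
  | bot => True
  | var p => p < n
  | and φ ψ => varsBelow n φ ∧ varsBelow n ψ
  | or φ ψ => varsBelow n φ ∧ varsBelow n ψ
  | imp φ ψ => varsBelow n φ ∧ varsBelow n ψ

/-- the propositional variable `p` occurs in the formula -/
def occurs (p : ℕ) : Formula → Prop
  | bot => False
  | var q => q = p
  | and φ ψ => occurs p φ ∨ occurs p ψ
  | or φ ψ => occurs p φ ∨ occurs p ψ
  | imp φ ψ => occurs p φ ∨ occurs p ψ

/-- uniform substitution -/
def subst (σ : ℕ → Formula) : Formula → Formula
  | bot => bot
  | var p => σ p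
  | and φ ψ => and (subst σ φ) (subst σ ψ)
  | or φ ψ => or (subst σ φ) (subst σ ψ)
  | imp φ ψ => imp (subst σ φ) (subst σ ψ)

end Formula

/-- finite conjunction (empty conjunction is ⊤) -/
def listAnd : List Formula → Formula
  | [] => Formula.top
  | φ :: l => Formula.and φ (listAnd l)

/-- finite disjunction (empty disjunction is ⊥) -/
def listOr : List Formula → Formula
  | [] => Formula.bot
  | φ :: l => Formula.or φ (listOr l)

/-! ## Kripke structures, models and satisfaction -/

/-- raw Kripke structure: worlds, relation, Boolean valuation -/
structure KStruct where
  W : Type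
  R : W → W → Prop
  V : W → ℕ → Bool

namespace KStruct

/-- a Kripke model: `R` is a partial order and `V` is persistent -/
def IsModel (M : KStruct) : Prop :=
  (∀ w, M.R w w) ∧
  (∀ w u v, M.R w u → M.R u v → M.R w v) ∧
  (∀ w u, M.R w u → M.R u w → w = u) ∧
  (∀ w u p, M.R w u → M.V w p = true → M.V u p = true)

/-- an `n`-model: a Kripke model whose valuation is restricted to the variables `p_0,…,p_{n-1}` -/
def IsNModel (M : KStruct) (n : ℕ) : Prop :=
  M.IsModel ∧ ∀ w p, n ≤ p → M.V w p = false

/-- intuitionistic satisfaction -/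
def sat (M : KStruct) : M.W → Formula → Prop
  | _, Formula.bot => False
  | w, Formula.var p => M.V w p = true
  | w, Formula.and φ ψ => M.sat w φ ∧ M.sat w ψ
  | w, Formula.or φ ψ => M.sat w φ ∨ M.sat w ψ
  | w, Formula.imp φ ψ => ∀ u, M.R w u → M.sat u φ → M.sat u ψ

/-- the submodel on a subset of the worlds -/
def restrict (M : KStruct) (S : Set M.W) : KStruct where
  W := S
  R := fun a b => M.R a.1 b.1
  V := fun a p => M.V a.1 p

end KStruct

/-- monotonic map between Kripke structures: preserves the order and the colors -/
def Monotonic (M N : KStruct) (f : M.W → N.W) : Prop :=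
  (∀ w u, M.R w u → N.R (f w) (f u)) ∧ (∀ w p, N.V (f w) p = M.V w p)

/-- p-morphism: a monotonic map satisfying the forth condition -/
def PMorphism (M N : KStruct) (f : M.W → N.W) : Prop :=
  Monotonic M N f ∧ ∀ w u', N.R (f w) u' → ∃ u, M.R w u ∧ f u = u'

/-- MR: the class of formulas reflected by monotonic maps between Kripke models -/
def MR (φ : Formula) : Prop :=
  ∀ (N M : KStruct), N.IsModel → M.IsModel →
    ∀ f : N.W → M.W, Monotonic N M f → ∀ w : N.W, M.sat (f w) φ → N.sat w φ

/-- `r` is a root of `M` -/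
def IsRoot (M : KStruct) (r : M.W) : Prop := ∀ w, M.R r w

/-- `M` is tree-like with root `r`: rooted, and each point has a finite,
linearly ordered set of predecessors -/
def IsTree (M : KStruct) (r : M.W) : Prop :=
  IsRoot M r ∧ (∀ w : M.W, {u | M.R u w}.Finite) ∧
  (∀ w u v : M.W, M.R u w → M.R v w → (M.R u v ∨ M.R v u))

/-- `u` is an immediate (proper) successor of `w` -/
def ImmSucc (M : KStruct) (w u : M.W) : Prop :=
  M.R w u ∧ w ≠ u ∧ ∀ v, M.R w v → M.R v u → v = w ∨ v = u

/-- `S` carries a color-preserving submodel of `M` -/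
def ColorPresSub (M : KStruct) (S : Set M.W) : Prop :=
  ∀ w ∈ S, ∀ u, M.R w u → ∃ v ∈ S, M.R w v ∧ ∀ p, M.V v p = M.V u p

/-! ## The β-formulas of finite models -/

/-- the variables among `p_0,…,p_{n-1}` true at `w` -/
def propList (M : KStruct) (n : ℕ) (w : M.W) : List Formula :=
  ((List.range n).filter (fun p => M.V w p)).map Formula.var

/-- the variables among `p_0,…,p_{n-1}` false at `w` -/
def notpropList (M : KStruct) (n : ℕ) (w : M.W) : List Formula :=
  ((List.range n).filter (fun p => !(M.V w p))).map Formula.var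

open Classical in
/-- the immediate successors of `w`, as a list -/
noncomputable def immSuccList (M : KStruct) [Fintype M.W] (w : M.W) : List M.W :=
  (Finset.univ.filter (fun u => ImmSucc M w u)).toList

/-- β(w), defined by recursion on the depth of `w` (computed with enough fuel):
`β(w) = ⋀prop(w) → (⋁notprop(w) ∨ β(w_1) ∨ … ∨ β(w_k))` where the `w_i` are the
immediate successors of `w` (for maximal `w` the last disjunct is the empty disjunction). -/
noncomputable def betaFuel (M : KStruct) [Fintype M.W] (n : ℕ) : ℕ → M.W → Formula
  | 0, _ => Formula.bot
  | (k+1), w =>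
      Formula.imp (listAnd (propList M n w))
        (listOr (notpropList M n w ++ (immSuccList M w).map (fun u => betaFuel M n k u)))

/-- β(w) for a point `w` of a finite `n`-model: `Fintype.card M.W` is an upper bound
for the depth of any point, so the recursion above never runs out of fuel. -/
noncomputable def beta (M : KStruct) [inst : Fintype M.W] (n : ℕ) (w : M.W) : Formula :=
  betaFuel M n (Fintype.card M.W) w

/-! ## Unravelings -/

/-- the unraveling `T_N` of a rooted model `(N, r)`: points are the finite sequences
`⟨r, w_1, …, w_k⟩` in which each entry is an immediate successor of the preceding one,
ordered by the initial-segment relation; such a sequence satisfies the same variables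
as its last entry. -/
def Unravel (M : KStruct) (r : M.W) : KStruct where
  W := {l : List M.W // l.head? = some r ∧ List.Chain' (ImmSucc M) l}
  R := fun σ τ => σ.1 <+: τ.1
  V := fun σ p => (σ.1.getLast?.map (fun w => M.V w p)).getD false

/-! ## Kripke frames -/

structure KFrame where
  W : Type
  R : W → W → Prop

namespace KFrame

/-- a Kripke frame: `R` is a partial order -/
def IsFrame (F : KFrame) : Prop :=
  (∀ w, F.R w w) ∧ (∀ w u v, F.R w u → F.R u v → F.R w v) ∧
  (∀ w u, F.R w u → F.R u w → w = u)

def Persistent (F : KFrame) (V : F.W → ℕ → Bool) : Prop :=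
  ∀ w u p, F.R w u → V w p = true → V u p = true

/-- the model on `F` given by a valuation -/
def model (F : KFrame) (V : F.W → ℕ → Bool) : KStruct := ⟨F.W, F.R, V⟩

/-- `F ⊨ φ` : `φ` is true at every point of every model on `F` -/
def valid (F : KFrame) (φ : Formula) : Prop :=
  ∀ V, F.Persistent V → ∀ w, (F.model V).sat w φ

/-- the substructure of `F` on a subset `S` of its domain, with the restricted order -/
def restrictF (F : KFrame) (S : Set F.W) : KFrame :=
  ⟨S, fun a b => F.R a.1 b.1⟩

end KFrame

/-- a monotonic map from a model `N` into a frame `F` which is color-consistent: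
`f(w) R f(u)` implies `col(w) ≤ col(u)` -/
def ColorConsistentMap (N : KStruct) (F : KFrame) (f : N.W → F.W) : Prop :=
  (∀ w u, N.R w u → F.R (f w) (f u)) ∧
  (∀ w u, F.R (f w) (f u) → ∀ p, N.V w p = true → N.V u p = true)


/-! ## The n-universal model 𝒯(n) for NNIL -/

/-- an `n`-color -/
abbrev Col (n : ℕ) := Fin n → Bool

/-- componentwise order on colors -/
def ColLE {n : ℕ} (c d : Col n) : Prop := ∀ i, c i = true → d i = true

def ColLT {n : ℕ} (c d : Col n) : Prop := ColLE c d ∧ c ≠ d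

/-- finite colored trees: a root color together with the list of subtrees
hanging above the root -/
inductive CTree (n : ℕ) : Type
  | node : Col n → List (CTree n) → CTree n

namespace CTree

variable {n : ℕ}

def color : CTree n → Col n
  | node c _ => c

def children : CTree n → List (CTree n)
  | node _ ts => ts

/-- the subtree of `t` at a position (a list of child indices) -/
def subt : List ℕ → CTree n → Option (CTree n)
  | [], t => some t
  | i :: l, t => (t.children[i]?).bind (subt l)

/-- the finite tree-like `n`-model determined by a colored tree: its worlds are
the positions of `t`, ordered by the initial-segment relation, and a position
satisfies `p_i` iff the color of the subtree there is `1` at `i`. -/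
def toModel (t : CTree n) : KStruct where
  W := {l : List ℕ // (subt l t).isSome = true}
  R := fun a b => a.1 <+: b.1
  V := fun a p =>
    if h : p < n then ((subt a.1 t).map (fun s => s.color ⟨p, h⟩)).getD false
    else false

/-- the root of the model of a tree -/
def root (t : CTree n) : t.toModel.W := ⟨[], rfl⟩

/-- an injective code of colors -/
def colCode (c : Col n) : ℕ := ∑ i : Fin n, (if c i then 2 ^ (i : ℕ) else 0)

/-- an injective code of lists of numbers -/
def listCode : List ℕ → ℕ
  | [] => 0
  | a :: l => Nat.pair a (listCode l) + 1

/-- an injective code of colored trees, used to order the children of every node of a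
tree in the universal model canonically -/
def code : CTree n → ℕ
  | node c ts => Nat.pair (colCode c) (listCode (ts.attach.map (fun x => code x.1)))
decreasing_by
  have := List.sizeOf_lt_of_mem x.2
  simp only [CTree.node.sizeOf_spec]
  omega

end CTree

/-- `MLE s t` (`s ≤ t`): there is a monotonic map from (the model of) `t` into `s` -/
def MLE {n : ℕ} (s t : CTree n) : Prop :=
  ∃ f : t.toModel.W → s.toModel.W, Monotonic t.toModel s.toModel f

/-- membership in the domain of the universal model `𝒯(n)`, built in layers:
layer 1 consists of the one-point trees (one for each color); a tree of a later layer
is built from a set `X` of pairwise `≤`-incomparable trees of earlier layers (encoded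
as a list sorted canonically by `code`) by adding a fresh root below whose color is
strictly smaller than every color occurring in the trees of `X`. -/
inductive UMem : {n : ℕ} → CTree n → Prop
  | single {n : ℕ} (c : Col n) : UMem (CTree.node c [])
  | step {n : ℕ} (c : Col n) (ts : List (CTree n)) :
      ts ≠ [] →
      (∀ t ∈ ts, UMem t) →
      List.Chain' (fun a b => CTree.code a < CTree.code b) ts →
      (∀ t ∈ ts, ∀ s ∈ ts, t ≠ s → ¬ MLE t s) →
      (∀ t ∈ ts, ∀ (l : List ℕ) (s : CTree n), CTree.subt l t = some s →
        ColLT c s.color) →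
      UMem (CTree.node c ts)

/-- the universal model `𝒯(n)`: its points are the trees in `UMem`, ordered by `≤`
(where `T_w ≤ T_u` iff there is a monotonic map from `T_u` into `T_w`), and the color
of a node is the color of the root of the corresponding tree. -/
def UnivModel (n : ℕ) : KStruct where
  W := {t : CTree n // UMem t}
  R := fun a b => MLE a.1 b.1
  V := fun a p => if h : p < n then a.1.color ⟨p, h⟩ else false

/-- mutual monotonic mappability (`≡`) of Kripke structures -/
def MEquiv (A B : KStruct) : Prop :=
  (∃ f : B.W → A.W, Monotonic B A f) ∧ (∃ g : A.W → B.W, Monotonic A B g)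

/-!
For a tree `w` let `β(w) = ⋀prop(w) → ⋁notprop(w) ∨ β(w_1) ∨ … ∨ β(w_k)`, the `w_i` the
children of `w`. At a point `u` of `𝒯(n)`, `β(w)` holds iff `w` does not map monotonically into
`u`, i.e. iff `u ≰ w`. This goes by induction on `w`: `node c ts` maps into `u` iff some `v ≥ u`
has color `c` and every child maps into `v`, and `v` falsifies the consequent of `β(w)` while
satisfying its antecedent iff `v` has color exactly `c` and `v ≤` every child.

Colors strictly increase along the trees of `𝒯(n)`, so `𝒯(n)` is finite, and an upset `U` is
defined by the conjunction of the `β(w)` over the finitely many `w ∉ U`.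
-/

namespace CTree

variable {n : ℕ}

@[elab_as_elim, induction_eliminator]
theorem induction {motive : CTree n → Prop}
    (node : ∀ c ts, (∀ t ∈ ts, motive t) → motive (CTree.node c ts)) : ∀ t, motive t
  | .node c ts => node c ts fun t _ => induction node t

theorem subt_append (l₁ l₂ : List ℕ) (t : CTree n) :
    subt (l₁ ++ l₂) t = (subt l₁ t).bind (subt l₂) := by
  induction l₁ generalizing t with
  | nil => rfl
  | cons i l ih => simp only [List.cons_append, subt, Option.bind_assoc, ih]

theorem subt_cons_node {c : Col n} {ts : List (CTree n)} {i : ℕ} (hi : i < ts.length)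
    (l : List ℕ) : subt (i :: l) (node c ts) = subt l ts[i] := by
  simp [subt, children, hi]

theorem lt_length_of_isSome_subt_cons {c : Col n} {ts : List (CTree n)} {i : ℕ} {l : List ℕ}
    (h : (subt (i :: l) (node c ts)).isSome) : i < ts.length := by
  by_contra hi
  simp [subt, children, List.getElem?_eq_none (Nat.le_of_not_lt hi)] at h

def colorAt {t : CTree n} (a : t.toModel.W) : Col n := ((subt a.1 t).get a.2).color

theorem colorAt_eq {t s : CTree n} {a : t.toModel.W} (h : subt a.1 t = some s) :
    colorAt a = s.color := by
  rw [colorAt, Option.get_of_eq_some a.2 h]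

theorem colorAt_root (t : CTree n) : colorAt t.root = t.color := rfl

theorem toModel_V {t : CTree n} (a : t.toModel.W) (p : ℕ) :
    t.toModel.V a p = if h : p < n then colorAt a ⟨p, h⟩ else false := by
  obtain ⟨s, hs⟩ := Option.isSome_iff_exists.mp a.2
  simp [toModel, colorAt_eq hs, hs]

theorem monotonic_iff {s t : CTree n} {f : s.toModel.W → t.toModel.W} :
    Monotonic s.toModel t.toModel f ↔
      (∀ a b : s.toModel.W, a.1 <+: b.1 → (f a).1 <+: (f b).1) ∧
        ∀ a, colorAt (f a) = colorAt a := by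
  refine and_congr Iff.rfl (forall_congr' fun a => ⟨fun h => funext fun i => ?_, fun h p => ?_⟩)
  · simpa [toModel_V] using h i
  · rw [toModel_V, toModel_V, h]

def subtEmbed {m s : CTree n} {pos : List ℕ} (h : subt pos m = some s) :
    s.toModel.W → m.toModel.W :=
  fun a => ⟨pos ++ a.1, by rw [subt_append, h]; exact a.2⟩

theorem colorAt_subtEmbed {m s : CTree n} {pos : List ℕ} (h : subt pos m = some s)
    (a : s.toModel.W) : colorAt (subtEmbed h a) = colorAt a := by
  obtain ⟨s', hs'⟩ := Option.isSome_iff_exists.mp a.2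
  rw [colorAt_eq hs', colorAt_eq (by rw [subtEmbed, subt_append, h]; exact hs')]

end CTree

namespace MLE

open CTree

variable {n : ℕ}

theorem refl (t : CTree n) : MLE t t := ⟨id, fun _ _ h => h, fun _ _ => rfl⟩

theorem trans {a b c : CTree n} : MLE a b → MLE b c → MLE a c
  | ⟨f, hf⟩, ⟨g, hg⟩ =>
    ⟨f ∘ g, fun _ _ h => hf.1 _ _ (hg.1 _ _ h), fun w p => (hf.2 (g w) p).trans (hg.2 w p)⟩

theorem of_subt {m s : CTree n} {pos : List ℕ} (h : subt pos m = some s) : MLE m s :=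
  ⟨subtEmbed h, monotonic_iff.2
    ⟨fun _ _ hab => (List.prefix_append_right_inj pos).2 hab, colorAt_subtEmbed h⟩⟩

theorem of_mem_children {c : Col n} {ts : List (CTree n)} {t : CTree n} (ht : t ∈ ts) :
    MLE (node c ts) t := by
  obtain ⟨i, hi, rfl⟩ := List.mem_iff_getElem.mp ht
  exact of_subt (pos := [i]) (subt_cons_node hi [])

/-- A monotonic map into `m` lands above the image of the root, so it factors through the
subtree of `m` there. -/
theorem exists_subt {m t : CTree n} (h : MLE m t) :
    ∃ pos s, subt pos m = some s ∧ s.color = t.color ∧ MLE s t := by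
  obtain ⟨f, hf⟩ := h
  rw [monotonic_iff] at hf
  set pos := (f t.root).1
  obtain ⟨s, hs⟩ := Option.isSome_iff_exists.mp (f t.root).2
  have hpos (x) : (f x).1 = pos ++ (f x).1.drop pos.length :=
    (List.prefix_iff_eq_append.mp (hf.1 _ x List.nil_prefix)).symm
  have hsome (x) : (subt ((f x).1.drop pos.length) s).isSome := by
    have := (f x).2
    rwa [hpos x, subt_append, hs] at this
  let g : t.toModel.W → s.toModel.W := fun x => ⟨_, hsome x⟩
  have hfg (x) : subtEmbed hs (g x) = f x := Subtype.ext (hpos x).symm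
  refine ⟨pos, s, hs, ?_, g, monotonic_iff.2 ⟨fun a b hab => ?_, fun a => ?_⟩⟩
  · rw [← colorAt_eq (a := f t.root) hs, hf.2, colorAt_root]
  · have := hf.1 a b hab
    rwa [← hfg a, ← hfg b, subtEmbed, subtEmbed, List.prefix_append_right_inj] at this
  · rw [← colorAt_subtEmbed hs, hfg, hf.2]

def nodeLift {m : CTree n} {c : Col n} {ts : List (CTree n)}
    (g : ∀ t ∈ ts, t.toModel.W → m.toModel.W) : (node c ts).toModel.W → m.toModel.W
  | ⟨[], _⟩ => m.root
  | ⟨i :: l, h⟩ =>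
    have hi := lt_length_of_isSome_subt_cons h
    g ts[i] (List.getElem_mem hi) ⟨l, by rwa [subt_cons_node hi] at h⟩

theorem node_of_forall {m : CTree n} {c : Col n} {ts : List (CTree n)}
    (hc : m.color = c) (hts : ∀ t ∈ ts, MLE m t) : MLE m (node c ts) := by
  choose g hg using hts
  simp only [monotonic_iff] at hg
  refine ⟨nodeLift g, monotonic_iff.2 ⟨?_, ?_⟩⟩
  · rintro ⟨_ | ⟨i, la⟩, ha⟩ ⟨_ | ⟨j, lb⟩, hb⟩ hab
    · exact List.nil_prefix
    · exact List.nil_prefix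
    · simp at hab
    · obtain ⟨rfl, hl⟩ := List.cons_prefix_cons.mp hab
      exact (hg _ _).1 ⟨la, _⟩ ⟨lb, _⟩ hl
  · rintro ⟨_ | ⟨i, l⟩, h⟩
    · exact hc
    · have hi := lt_length_of_isSome_subt_cons h
      exact ((hg _ _).2 _).trans (colorAt_subtEmbed (pos := [i]) (subt_cons_node hi []) _).symm

end MLE

namespace UMem

open CTree

variable {n : ℕ} {c : Col n} {ts : List (CTree n)}

theorem of_mem_children (h : UMem (node c ts)) {t : CTree n} (ht : t ∈ ts) : UMem t := by
  cases h with
  | single => simp at ht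
  | step _ _ _ hts => exact hts t ht

theorem isChain_code (h : UMem (node c ts)) : ts.IsChain (fun a b => a.code < b.code) := by
  cases h with
  | single => exact List.isChain_nil
  | step _ _ _ _ hchain => exact hchain

theorem colLT_of_subt_child (h : UMem (node c ts)) {t s : CTree n} (ht : t ∈ ts) {l : List ℕ}
    (hs : subt l t = some s) : ColLT c s.color := by
  cases h with
  | single => simp at ht
  | step _ _ _ _ _ _ hcol => exact hcol t ht l s hs

theorem of_subt {t s : CTree n} (ht : UMem t) : ∀ {l : List ℕ}, subt l t = some s → UMem s
  | [], h => by cases h; exact ht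
  | i :: l, h => by
    obtain ⟨c, ts⟩ := t
    have hi := lt_length_of_isSome_subt_cons (Option.isSome_of_eq_some h)
    rw [subt_cons_node hi] at h
    exact (ht.of_mem_children (List.getElem_mem hi)).of_subt h

theorem colLE_of_subt {t s : CTree n} (ht : UMem t) {l : List ℕ} (h : CTree.subt l t = some s) :
    ColLE t.color s.color := by
  obtain ⟨c, ts⟩ := t
  cases l with
  | nil => cases h; exact fun _ => id
  | cons i l =>
    have hi := lt_length_of_isSome_subt_cons (Option.isSome_of_eq_some h)
    rw [subt_cons_node hi] at h
    exact (ht.colLT_of_subt_child (List.getElem_mem hi) h).1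

theorem colLE_of_mle {m t : CTree n} (hm : UMem m) (h : MLE m t) : ColLE m.color t.color := by
  obtain ⟨pos, s, hs, hc, -⟩ := MLE.exists_subt h
  exact hc ▸ hm.colLE_of_subt hs

end UMem

namespace UnivModel

variable {n : ℕ}

instance : IsPreorder (UnivModel n).W (UnivModel n).R where
  refl a := MLE.refl a.1
  trans _ _ _ := MLE.trans

theorem V_fin (v : (UnivModel n).W) (i : Fin n) : (UnivModel n).V v i = v.1.color i := by
  simp [UnivModel]

theorem V_mono (u v : (UnivModel n).W) (p : ℕ) (h : (UnivModel n).R u v)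
    (hp : (UnivModel n).V u p = true) : (UnivModel n).V v p = true := by
  by_cases hpn : p < n
  · have hle := UMem.colLE_of_mle u.2 h ⟨p, hpn⟩
    simp_all [UnivModel]
  · simp [UnivModel, hpn] at hp

theorem R_node_iff {u : (UnivModel n).W} {c : Col n} {ts : List (CTree n)} :
    MLE u.1 (.node c ts) ↔
      ∃ v : (UnivModel n).W, (UnivModel n).R u v ∧ v.1.color = c ∧ ∀ t ∈ ts, MLE v.1 t := by
  constructor
  · intro h
    obtain ⟨pos, s, hs, hc, hst⟩ := MLE.exists_subt h
    exact ⟨⟨s, u.2.of_subt hs⟩, MLE.of_subt hs, hc, fun t ht => hst.trans (MLE.of_mem_children ht)⟩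
  · rintro ⟨v, huv, hc, hts⟩
    exact MLE.trans huv (MLE.node_of_forall hc hts)

end UnivModel

namespace Formula

def listAnd₁ : Formula → List Formula → Formula
  | φ, [] => φ
  | φ, ψ :: l => and φ (listAnd₁ ψ l)

/-- `⋀ L → d`, read as `d` for empty `L`: `⊤ = ⊥ → ⊥` is not implication-free, so
`⊤ → d` would not be NNIL. -/
def listImp : List Formula → Formula → Formula
  | [], d => d
  | φ :: l, d => imp (listAnd₁ φ l) d

theorem noImp_listAnd₁ {φ : Formula} {l : List Formula} (h : ∀ ψ ∈ φ :: l, ψ.noImp) :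
    (listAnd₁ φ l).noImp := by
  induction l generalizing φ <;> simp_all [listAnd₁, noImp]

theorem varsBelow_listAnd₁ {n : ℕ} {φ : Formula} {l : List Formula}
    (h : ∀ ψ ∈ φ :: l, ψ.varsBelow n) : (listAnd₁ φ l).varsBelow n := by
  induction l generalizing φ <;> simp_all [listAnd₁, varsBelow]

theorem isNNIL_listImp {L : List Formula} {d : Formula} (hL : ∀ φ ∈ L, φ.noImp) (hd : d.IsNNIL) :
    (listImp L d).IsNNIL := by
  cases L with
  | nil => exact hd
  | cons φ l => exact ⟨noImp_listAnd₁ hL, hd⟩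

theorem varsBelow_listImp {n : ℕ} {L : List Formula} {d : Formula} (hL : ∀ φ ∈ L, φ.varsBelow n)
    (hd : d.varsBelow n) : (listImp L d).varsBelow n := by
  cases L with
  | nil => exact hd
  | cons φ l => exact ⟨varsBelow_listAnd₁ hL, hd⟩

end Formula

theorem isNNIL_listAnd {l : List Formula} (h : ∀ φ ∈ l, φ.IsNNIL) : (listAnd l).IsNNIL := by
  induction l <;> simp_all [listAnd, Formula.top, Formula.IsNNIL, Formula.noImp]

theorem varsBelow_listAnd {n : ℕ} {l : List Formula} (h : ∀ φ ∈ l, φ.varsBelow n) :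
    (listAnd l).varsBelow n := by
  induction l <;> simp_all [listAnd, Formula.top, Formula.varsBelow]

theorem isNNIL_listOr {l : List Formula} (h : ∀ φ ∈ l, φ.IsNNIL) : (listOr l).IsNNIL := by
  induction l <;> simp_all [listOr, Formula.IsNNIL]

theorem varsBelow_listOr {n : ℕ} {l : List Formula} (h : ∀ φ ∈ l, φ.varsBelow n) :
    (listOr l).varsBelow n := by
  induction l <;> simp_all [listOr, Formula.varsBelow]

namespace KStruct

variable (M : KStruct)

theorem sat_listAnd (w : M.W) (l : List Formula) :
    M.sat w (listAnd l) ↔ ∀ φ ∈ l, M.sat w φ := by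
  induction l with
  | nil => simp [listAnd, Formula.top, sat]
  | cons φ l ih => simp [listAnd, sat, ih]

theorem sat_listOr (w : M.W) (l : List Formula) :
    M.sat w (listOr l) ↔ ∃ φ ∈ l, M.sat w φ := by
  induction l with
  | nil => simp [listOr, sat]
  | cons φ l ih => simp [listOr, sat, ih]

theorem sat_listAnd₁ (w : M.W) (φ : Formula) (l : List Formula) :
    M.sat w (Formula.listAnd₁ φ l) ↔ ∀ ψ ∈ φ :: l, M.sat w ψ := by
  induction l generalizing φ with
  | nil => simp [Formula.listAnd₁]
  | cons ψ l ih => simp [Formula.listAnd₁, sat, ih]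

variable {M}

theorem sat_mono [IsTrans M.W M.R] (hV : ∀ w u p, M.R w u → M.V w p = true → M.V u p = true)
    {w u : M.W} (hwu : M.R w u) {φ : Formula} (h : M.sat w φ) : M.sat u φ := by
  induction φ generalizing w u with
  | bot => exact h
  | var p => exact hV w u p hwu h
  | and φ ψ ihφ ihψ => exact ⟨ihφ hwu h.1, ihψ hwu h.2⟩
  | or φ ψ ihφ ihψ => exact h.imp (ihφ hwu) (ihψ hwu)
  | imp φ ψ => exact fun v huv => h v (_root_.trans hwu huv)

theorem sat_listImp [IsPreorder M.W M.R]
    (hV : ∀ w u p, M.R w u → M.V w p = true → M.V u p = true) (u : M.W) (L : List Formula)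
    (d : Formula) :
    M.sat u (Formula.listImp L d) ↔ ∀ v, M.R u v → (∀ φ ∈ L, M.sat v φ) → M.sat v d := by
  cases L with
  | nil =>
    simp only [Formula.listImp, List.not_mem_nil, false_imp_iff, forall_const]
    exact ⟨fun h v huv => sat_mono hV huv h, fun h => h u (refl u)⟩
  | cons φ l => simp only [Formula.listImp, sat, sat_listAnd₁]

end KStruct

section Colors

variable {n : ℕ}

def Col.trueVars (c : Col n) : List Formula :=
  ((List.finRange n).filter (c ·)).map (Formula.var ·.1)

def Col.falseVars (c : Col n) : List Formula :=
  ((List.finRange n).filter (!c ·)).map (Formula.var ·.1)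

theorem KStruct.sat_trueVars (M : KStruct) (v : M.W) (c : Col n) :
    (∀ φ ∈ c.trueVars, M.sat v φ) ↔ ∀ i : Fin n, c i = true → M.V v i = true := by
  simp [Col.trueVars, KStruct.sat]

theorem KStruct.sat_falseVars (M : KStruct) (v : M.W) (c : Col n) :
    (∃ φ ∈ c.falseVars, M.sat v φ) ↔ ∃ i : Fin n, c i = false ∧ M.V v i = true := by
  simp [Col.falseVars, KStruct.sat]

theorem Col.eq_iff_colLE_and_not_exists {c d : Col n} :
    d = c ↔ ColLE c d ∧ ¬ ∃ i, c i = false ∧ d i = true := by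
  constructor
  · rintro rfl
    exact ⟨fun _ => id, fun ⟨i, hc, hd⟩ => by simp [hc] at hd⟩
  · rintro ⟨hle, hnot⟩
    funext i
    cases hc : c i
    · simpa [hc] using fun hd => hnot ⟨i, hc, hd⟩
    · exact hle i hc

end Colors

namespace CTree

variable {n : ℕ}

def nnilBeta : CTree n → Formula
  | node c ts => Formula.listImp c.trueVars (listOr (c.falseVars ++ ts.map nnilBeta))

theorem isNNIL_nnilBeta (t : CTree n) : t.nnilBeta.IsNNIL := by
  induction t with
  | node c ts ih =>
    rw [nnilBeta]
    refine Formula.isNNIL_listImp (by simp [Col.trueVars, Formula.noImp]) (isNNIL_listOr ?_)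
    simp only [List.mem_append, List.mem_map]
    rintro φ (hφ | ⟨t, ht, rfl⟩)
    · obtain ⟨i, -, rfl⟩ := List.mem_map.1 hφ
      trivial
    · exact ih t ht

theorem varsBelow_nnilBeta (t : CTree n) : t.nnilBeta.varsBelow n := by
  induction t with
  | node c ts ih =>
    rw [nnilBeta]
    refine Formula.varsBelow_listImp (by simp [Col.trueVars, Formula.varsBelow])
      (varsBelow_listOr ?_)
    simp only [List.mem_append, List.mem_map]
    rintro φ (hφ | ⟨t, ht, rfl⟩)
    · obtain ⟨i, -, rfl⟩ := List.mem_map.1 hφ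
      exact i.2
    · exact ih t ht

theorem sat_nnilBeta (t : CTree n) (u : (UnivModel n).W) :
    (UnivModel n).sat u t.nnilBeta ↔ ¬ MLE u.1 t := by
  induction t generalizing u with
  | node c ts ih =>
    have hchildren (v : (UnivModel n).W) :
        (∃ t ∈ ts, (UnivModel n).sat v t.nnilBeta) ↔ ¬ ∀ t ∈ ts, MLE v.1 t := by
      simp only [not_forall, exists_prop]
      exact exists_congr fun t => and_congr_right fun ht => ih t ht v
    rw [nnilBeta, KStruct.sat_listImp UnivModel.V_mono, UnivModel.R_node_iff, not_exists]
    refine forall_congr' fun v => ?_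
    rw [not_and]
    refine imp_congr_right fun _ => ?_
    simp only [KStruct.sat_listOr, List.mem_append, or_and_right, exists_or,
      KStruct.sat_falseVars, List.mem_map, exists_exists_and_eq_and, hchildren,
      KStruct.sat_trueVars, UnivModel.V_fin, Col.eq_iff_colLE_and_not_exists]
    have logic (A B C : Prop) : (A → B ∨ ¬C) ↔ ¬((A ∧ ¬B) ∧ C) := by tauto
    exact logic _ _ _

end CTree

theorem List.eq_of_mem_iff_of_pairwise_lt_comp {α β : Type*} [Preorder β] (f : α → β)
    {l₁ l₂ : List α} (h₁ : l₁.Pairwise (f · < f ·)) (h₂ : l₂.Pairwise (f · < f ·))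
    (h : ∀ a, a ∈ l₁ ↔ a ∈ l₂) : l₁ = l₂ :=
  have : Std.Irrefl (f · < f ·) := ⟨fun a => lt_irrefl (f a)⟩
  have : Std.Antisymm (f · < f ·) := ⟨fun _ _ hab hba => absurd (hab.trans hba) (lt_irrefl _)⟩
  h₁.eq_of_mem_iff h₂ h

section Finiteness

variable {n : ℕ}

def Col.ones (c : Col n) : Finset (Fin n) := Finset.univ.filter (c · = true)

theorem Col.ones_subset_ones {c d : Col n} : Col.ones c ⊆ Col.ones d ↔ ColLE c d := by
  simp [Col.ones, ColLE, Finset.subset_iff]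

theorem ColLT.card_ones_lt {c d : Col n} (h : ColLT c d) :
    (Col.ones c).card < (Col.ones d).card :=
  Finset.card_lt_card (Finset.ssubset_def.2 ⟨Col.ones_subset_ones.2 h.1, fun hdc =>
    h.2 (funext fun i => Bool.eq_iff_iff.2 ⟨h.1 i, Col.ones_subset_ones.1 hdc i⟩)⟩)

theorem UMem.injOn_color_children :
    Set.InjOn (fun t : CTree n => (t.color, {s | s ∈ t.children})) {t | UMem t} := by
  rintro ⟨c₁, ts₁⟩ h₁ ⟨c₂, ts₂⟩ h₂ heq
  simp only [CTree.color, CTree.children, Prod.mk.injEq, Set.ext_iff, Set.mem_ofPred_eq] at heq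
  rw [heq.1, List.eq_of_mem_iff_of_pairwise_lt_comp CTree.code (UMem.isChain_code h₁).pairwise
    (UMem.isChain_code h₂).pairwise heq.2]

/-- Colors strictly increase from a tree of `𝒯(n)` to its children, so the children of a tree
in the `k + 1`-st of these sets lie in the `k`-th. -/
theorem UMem.finite_of_lt_card_add (k : ℕ) :
    {t : CTree n | UMem t ∧ n < (Col.ones t.color).card + k}.Finite := by
  induction k with
  | zero =>
    refine Set.finite_empty.subset fun t ⟨_, ht⟩ => ?_
    have := Finset.card_le_univ (Col.ones t.color)
    simp only [Fintype.card_fin] at this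
    omega
  | succ k ih =>
    refine Set.Finite.of_injOn (f := fun t : CTree n => (t.color, {s | s ∈ t.children})) ?_
      (injOn_color_children.mono fun t ht => ht.1) (Set.finite_univ.prod ih.finite_subsets)
    rintro ⟨c, ts⟩ ⟨ht, hcard⟩
    refine ⟨trivial, fun s hs => ⟨ht.of_mem_children hs, ?_⟩⟩
    have := ColLT.card_ones_lt (ht.colLT_of_subt_child hs (l := []) rfl)
    change n < (Col.ones c).card + (k + 1) at hcard
    omega

instance UnivModel.finite (n : ℕ) : Finite (UnivModel n).W :=
  ((UMem.finite_of_lt_card_add (n + 1)).subset fun t ht => ⟨ht, by omega⟩).to_subtype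

end Finiteness

/-- every upset of the universal model `𝒯(n)` is definable by a
NNIL-formula in the variables `p_0,…,p_{n-1}` (`𝒯(n)` is an exact model). -/
theorem univ_model_exact (n : ℕ) (U : Set (UnivModel n).W)
    (hU : ∀ a b : (UnivModel n).W, a ∈ U → (UnivModel n).R a b → b ∈ U) :
    ∃ φ : Formula, φ.IsNNIL ∧ φ.varsBelow n ∧
      ∀ u : (UnivModel n).W, ((UnivModel n).sat u φ ↔ u ∈ U) := by
  classical
  have := Fintype.ofFinite (UnivModel n).W
  let outside := (Finset.univ.filter (· ∉ U)).toList
  refine ⟨listAnd (outside.map fun w => w.1.nnilBeta),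
    isNNIL_listAnd (List.forall_mem_map.2 fun w _ => w.1.isNNIL_nnilBeta),
    varsBelow_listAnd (List.forall_mem_map.2 fun w _ => w.1.varsBelow_nnilBeta), fun u => ?_⟩
  simp only [KStruct.sat_listAnd, List.forall_mem_map, outside, Finset.mem_toList,
    Finset.mem_filter, Finset.mem_univ, true_and, CTree.sat_nnilBeta]
  exact ⟨fun h => by_contra fun hu => h u hu (MLE.refl _), fun hu w hw huw => hw (hU u w hu huw)⟩
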